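/- arXiv:2601.17579 — 2 statements merged into one kernel-verified Lean document; each statement's English description precedes it below -/
import Mathlib

section
/- (Compactness of the fractional gradient away from the domain; sequential form.) Let d ≥ 1, s ∈ (0,1), let Ω ⊂ ℝ^d be open and bounded, and let Ω₁ ⊂ ℝ^d be open with cl(Ω) ⊂ Ω₁. Let (u_n) be a sequence in C_c^∞(Ω) such that sup_n ( ‖u_n‖_{L²(ℝ^d)} + ‖∇^s u_n‖_{L²(ℝ^d; ℝ^d)} ) < ∞. Then there exists a subsequence (u_{n_k}) such that the restrictions of ∇^s u_{n_k} to ℝ^d \ Ω₁ converge strongly in L²(ℝ^d \ Ω₁; ℝ^d). -/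
open MeasureTheory Filter Topology

noncomputable section

/-- The normalising constant `μ_s` of the Riesz fractional operators. -/
def muS (d : ℕ) (s : ℝ) : ℝ :=
  2 ^ s * Real.pi ^ (-(d : ℝ) / 2) * Real.Gamma (((d : ℝ) + s + 1) / 2) /
    Real.Gamma ((1 - s) / 2)

/-- The Riesz fractional gradient `∇^s u (x)`. -/
def fracGrad (d : ℕ) (s : ℝ) (u : EuclideanSpace ℝ (Fin d) → ℝ)
    (x : EuclideanSpace ℝ (Fin d)) : EuclideanSpace ℝ (Fin d) :=
  muS d s • ∫ y, (‖x - y‖ ^ ((d : ℝ) + s + 1))⁻¹ • ((u x - u y) • (x - y))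

set_option maxHeartbeats 2000000 in
/-- Compactness of the fractional gradient away from the domain (sequential form):
if `(u_n) ⊆ C_c^∞(Ω)` is bounded in the `H^s` norm and `cl(Ω) ⊆ Ω₁`, then a subsequence
of `(∇^s u_n)|_{ℝ^d \ Ω₁}` converges strongly in `L²(ℝ^d \ Ω₁; ℝ^d)`. -/
theorem stmt6 (d : ℕ) (hd : 1 ≤ d) (s : ℝ) (hs : s ∈ Set.Ioo (0 : ℝ) 1)
    (Ω Ω₁ : Set (EuclideanSpace ℝ (Fin d)))
    (hΩo : IsOpen Ω) (hΩb : Bornology.IsBounded Ω)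
    (hΩ₁o : IsOpen Ω₁) (hΩΩ₁ : closure Ω ⊆ Ω₁)
    (u : ℕ → EuclideanSpace ℝ (Fin d) → ℝ)
    (hsm : ∀ n, ContDiff ℝ (⊤ : ℕ∞) (u n)) (hsupp : ∀ n, HasCompactSupport (u n))
    (hΩsupp : ∀ n, tsupport (u n) ⊆ Ω)
    (hbdd : ∃ M : ℝ, ∀ n,
      (∫ x, (u n x) ^ 2) ^ ((1 : ℝ) / 2) +
        (∫ x, ‖fracGrad d s (u n) x‖ ^ 2) ^ ((1 : ℝ) / 2) ≤ M) :
    ∃ σ : ℕ → ℕ, StrictMono σ ∧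
      ∃ V : EuclideanSpace ℝ (Fin d) → EuclideanSpace ℝ (Fin d),
        MemLp V 2 (volume.restrict Ω₁ᶜ) ∧
        Tendsto (fun k => ∫ x in Ω₁ᶜ, ‖fracGrad d s (u (σ k)) x - V x‖ ^ 2)
          atTop (𝓝 0) := by
  classical
  obtain ⟨M, hM⟩ := hbdd
  rcases Set.eq_empty_or_nonempty (Ω₁ᶜ) with hemp | ⟨z₀, hz₀⟩
  · exact ⟨id, strictMono_id, fun _ => 0, MemLp.zero, by simp [hemp]⟩
  -- basic constants
  set r : ℝ := (d : ℝ) + s + 1 with hr_def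
  have hd1 : (1 : ℝ) ≤ (d : ℝ) := by exact_mod_cast hd
  have hr1 : (1 : ℝ) ≤ r := by simp only [hr_def]; linarith [hs.1.le]
  have hr0 : (0 : ℝ) ≤ r := by linarith
  have h1r : 1 - r ≤ 0 := by linarith
  have hrd : (d : ℝ) < 2 * (r - 1) := by simp only [hr_def]; linarith [hs.1]
  set K₀ : Set (EuclideanSpace ℝ (Fin d)) := closure Ω with hK₀_def
  have hK₀c : IsCompact K₀ := hΩb.isCompact_closure
  have hK₀cl : IsClosed K₀ := isClosed_closure
  have hK₀Ω₁ : K₀ ⊆ Ω₁ := hΩΩ₁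
  have hts : ∀ n, tsupport (u n) ⊆ K₀ := fun n => (hΩsupp n).trans subset_closure
  have hu0 : ∀ n x, x ∉ K₀ → u n x = 0 := fun n x hx =>
    image_eq_zero_of_notMem_tsupport (fun h => hx (hts n h))
  have hmeasΩ₁c : MeasurableSet (Ω₁ᶜ) := hΩ₁o.measurableSet.compl
  -- kernel
  set Kk : EuclideanSpace ℝ (Fin d) → EuclideanSpace ℝ (Fin d) → EuclideanSpace ℝ (Fin d) :=
    fun x y => (‖x - y‖ ^ r)⁻¹ • (x - y) with hKk_def
  have hKnorm : ∀ x y : EuclideanSpace ℝ (Fin d), x ≠ y → ‖Kk x y‖ = ‖x - y‖ ^ (1 - r) := by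
    intro x y hxy
    have h : (0:ℝ) < ‖x - y‖ := by rwa [norm_pos_iff, sub_ne_zero]
    simp only [hKk_def]
    rw [norm_smul, norm_inv, Real.norm_eq_abs,
      abs_of_nonneg (Real.rpow_nonneg (norm_nonneg _) r),
      Real.rpow_sub h, Real.rpow_one, div_eq_mul_inv, mul_comm]
  have hKcont : ∀ x y : EuclideanSpace ℝ (Fin d), x ≠ y →
      ContinuousAt (fun p : EuclideanSpace ℝ (Fin d) × EuclideanSpace ℝ (Fin d) =>
        Kk p.1 p.2) (x, y) := by
    intro x y hxy
    have h : (0:ℝ) < ‖x - y‖ := by rwa [norm_pos_iff, sub_ne_zero]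
    have hne : ‖x - y‖ ^ r ≠ 0 := (Real.rpow_pos_of_pos h r).ne'
    simp only [hKk_def]
    have hc1 : ContinuousAt (fun p : EuclideanSpace ℝ (Fin d) × EuclideanSpace ℝ (Fin d) =>
        p.1 - p.2) (x, y) := (continuous_fst.sub continuous_snd).continuousAt
    exact ((hc1.norm.rpow_const (Or.inr hr0)).inv₀ hne).smul hc1
  -- distance separation
  obtain ⟨δ₀, hδ₀, hthick⟩ := hK₀c.exists_thickening_subset_open hΩ₁o hK₀Ω₁
  have hdist : ∀ x ∈ Ω₁ᶜ, ∀ y ∈ K₀, δ₀ ≤ ‖x - y‖ := by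
    intro x hx y hy
    by_contra h
    push_neg at h
    exact hx (hthick (Metric.mem_thickening_iff.mpr ⟨y, hy, by rwa [dist_eq_norm]⟩))
  obtain ⟨R₀, hR₀⟩ := hK₀c.isBounded.subset_closedBall (0 : EuclideanSpace ℝ (Fin d))
  set R : ℝ := max R₀ 0 with hR_def
  have hR : ∀ y ∈ K₀, ‖y‖ ≤ R := by
    intro y hy
    have := hR₀ hy
    rw [Metric.mem_closedBall, dist_zero_right] at this
    exact this.trans (le_max_left _ _)
  have hR0 : 0 ≤ R := le_max_right _ _
  set c : ℝ := δ₀ / (1 + R + δ₀) with hc_def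
  have hc : 0 < c := div_pos hδ₀ (by linarith)
  have hcx : ∀ x ∈ Ω₁ᶜ, ∀ y ∈ K₀, c * (1 + ‖x‖) ≤ ‖x - y‖ := by
    intro x hx y hy
    have h1 := hdist x hx y hy
    have h2 := hR y hy
    have h3 : ‖x‖ ≤ ‖x - y‖ + ‖y‖ := by
      calc ‖x‖ = ‖x - y + y‖ := by rw [sub_add_cancel]
      _ ≤ ‖x - y‖ + ‖y‖ := norm_add_le _ _
    rw [hc_def, div_mul_eq_mul_div, div_le_iff₀ (by linarith)]
    nlinarith [norm_nonneg x, norm_nonneg (x - y)]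
  set κ : EuclideanSpace ℝ (Fin d) → ℝ := fun x => (c * (1 + ‖x‖)) ^ (1 - r) with hκ_def
  have hκpos : ∀ x, 0 < κ x := fun x =>
    Real.rpow_pos_of_pos (by positivity) _
  have hKle : ∀ x ∈ Ω₁ᶜ, ∀ y ∈ K₀, ‖Kk x y‖ ≤ κ x := by
    intro x hx y hy
    have h1 := hdist x hx y hy
    have hxy : x ≠ y := by
      intro h
      rw [h, sub_self, norm_zero] at h1
      linarith
    rw [hKnorm x y hxy]
    exact Real.rpow_le_rpow_of_nonpos (by positivity) (hcx x hx y hy) h1r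
  -- integrability in y
  have hcont0 : ∀ n x, x ∉ K₀ → Continuous (fun y => u n y • Kk x y) := by
    intro n x hx
    rw [continuous_iff_continuousAt]
    intro y
    rcases ne_or_eq x y with hxy | rfl
    · have hKy : ContinuousAt (fun y' => Kk x y') y :=
        (hKcont x y hxy).comp ((Continuous.prodMk_right x).continuousAt)
      exact ((hsm n).continuous.continuousAt).smul hKy
    · have hev : (fun y' => u n y' • Kk x y') =ᶠ[𝓝 x] fun _ => (0 : EuclideanSpace ℝ (Fin d)) := by
        filter_upwards [hK₀cl.isOpen_compl.eventually_mem hx] with z hz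
        simp [hu0 n z hz]
      exact continuousAt_const.congr hev.symm
  have hInt : ∀ n x, x ∉ K₀ → Integrable (fun y => u n y • Kk x y) := by
    intro n x hx
    apply (hcont0 n x hx).integrable_of_hasCompactSupport
    exact (hsupp n).smul_right
  have hIntu : ∀ n, Integrable (fun y => |u n y|) := fun n =>
    ((hsm n).continuous.integrable_of_hasCompactSupport (hsupp n)).abs
  set T : ℕ → EuclideanSpace ℝ (Fin d) → EuclideanSpace ℝ (Fin d) :=
    fun n x => ∫ y, u n y • Kk x y with hT_def
  have hrep : ∀ n, ∀ x ∈ Ω₁ᶜ, fracGrad d s (u n) x = (-(muS d s)) • T n x := by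
    intro n x hx
    have hux : u n x = 0 := hu0 n x fun h => hx (hK₀Ω₁ h)
    have heq : ∀ y, (‖x - y‖ ^ ((d:ℝ) + s + 1))⁻¹ • ((u n x - u n y) • (x - y)) =
        -(u n y • Kk x y) := by
      intro y
      simp only [hKk_def, hux, zero_sub, ← hr_def, smul_smul]
      rw [← neg_smul]
      congr 1
      ring
    simp only [fracGrad, heq, hT_def]
    rw [integral_neg, smul_neg, ← neg_smul]
  -- L² and L¹ bounds
  have hM2 : ∀ n, (∫ x, (u n x) ^ 2) ^ ((1 : ℝ) / 2) ≤ M := by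
    intro n
    have h2 : (0:ℝ) ≤ (∫ x, ‖fracGrad d s (u n) x‖ ^ 2) ^ ((1 : ℝ) / 2) :=
      Real.rpow_nonneg (integral_nonneg fun x => by positivity) _
    linarith [hM n]
  have hM0 : 0 ≤ M := by
    have h1 : (0:ℝ) ≤ (∫ x, (u 0 x) ^ 2) ^ ((1 : ℝ) / 2) :=
      Real.rpow_nonneg (integral_nonneg fun x => by positivity) _
    have h2 : (0:ℝ) ≤ (∫ x, ‖fracGrad d s (u 0) x‖ ^ 2) ^ ((1 : ℝ) / 2) :=
      Real.rpow_nonneg (integral_nonneg fun x => by positivity) _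
    linarith [hM 0]
  set B : ℝ := M * ((volume K₀).toReal) ^ ((1:ℝ)/2) with hB_def
  have hB0 : 0 ≤ B := mul_nonneg hM0 (Real.rpow_nonneg ENNReal.toReal_nonneg _)
  have hL1 : ∀ n, (∫ y, |u n y|) ≤ B := by
    intro n
    have hpq : Real.HolderConjugate 2 2 := ⟨by norm_num, by norm_num, by norm_num⟩
    have hgind : MemLp (K₀.indicator fun _ => (1:ℝ)) (ENNReal.ofReal 2) volume :=
      memLp_indicator_const _ hK₀cl.measurableSet _ (Or.inr hK₀c.measure_lt_top.ne)
    have hfmem : MemLp (fun y => |u n y|) (ENNReal.ofReal 2) volume := by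
      have h1 : MemLp (u n) (ENNReal.ofReal 2) volume :=
        (hsm n).continuous.memLp_of_hasCompactSupport (hsupp n)
      simpa [Real.norm_eq_abs] using h1.norm
    have key := integral_mul_le_Lp_mul_Lq_of_nonneg hpq
      (ae_of_all _ fun y => abs_nonneg (u n y))
      (ae_of_all _ fun y => Set.indicator_nonneg (fun _ _ => zero_le_one) y) hfmem hgind
    have hL : (∫ y, |u n y| * (K₀.indicator fun _ => (1:ℝ)) y) = ∫ y, |u n y| := by
      congr 1
      funext y
      by_cases hy : y ∈ K₀
      · simp [Set.indicator_of_mem hy]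
      · simp [Set.indicator_of_notMem hy, hu0 n y hy]
    have hsq : ∀ a : ℝ, |a| ^ (2:ℝ) = a ^ 2 := fun a => by
      rw [show (2:ℝ) = ((2:ℕ):ℝ) by norm_num, Real.rpow_natCast, sq_abs]
    have hRf : (∫ y, |u n y| ^ (2:ℝ)) = ∫ y, (u n y) ^ 2 := by
      congr 1; funext y; exact hsq _
    have hRg : (∫ y, ((K₀.indicator fun _ => (1:ℝ)) y) ^ (2:ℝ)) = (volume K₀).toReal := by
      have : (fun y => ((K₀.indicator fun _ => (1:ℝ)) y) ^ (2:ℝ)) =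
          K₀.indicator fun _ => (1:ℝ) := by
        funext y
        by_cases hy : y ∈ K₀
        · simp [Set.indicator_of_mem hy]
        · simp [Set.indicator_of_notMem hy]
      rw [this, integral_indicator_const (1:ℝ) hK₀cl.measurableSet, smul_eq_mul, mul_one, measureReal_def]
    rw [hL, hRf, hRg] at key
    calc (∫ y, |u n y|) ≤ (∫ y, (u n y) ^ 2) ^ ((1:ℝ)/2) * ((volume K₀).toReal) ^ ((1:ℝ)/2) := by
          simpa [one_div] using key
      _ ≤ M * ((volume K₀).toReal) ^ ((1:ℝ)/2) :=
          mul_le_mul_of_nonneg_right (hM2 n) (Real.rpow_nonneg ENNReal.toReal_nonneg _)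
      _ = B := by rw [hB_def]
  have hTle : ∀ n, ∀ x ∈ Ω₁ᶜ, ‖T n x‖ ≤ B * κ x := by
    intro n x hx
    have hxK : x ∉ K₀ := fun h => hx (hK₀Ω₁ h)
    have step : (∫ y, ‖u n y • Kk x y‖) ≤ ∫ y, |u n y| * κ x := by
      refine integral_mono (hInt n x hxK).norm ((hIntu n).mul_const _) fun y => ?_
      rw [norm_smul, Real.norm_eq_abs]
      by_cases hy : u n y = 0
      · simp [hy]
      · exact mul_le_mul_of_nonneg_left
          (hKle x hx y (hts n (subset_tsupport _ (Function.mem_support.mpr hy))))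
          (abs_nonneg _)
    calc ‖T n x‖ ≤ ∫ y, ‖u n y • Kk x y‖ := norm_integral_le_integral_norm _
      _ ≤ ∫ y, |u n y| * κ x := step
      _ = (∫ y, |u n y|) * κ x := integral_mul_const _ _
      _ ≤ B * κ x := mul_le_mul_of_nonneg_right (hL1 n) (hκpos x).le
  -- uniform-in-n continuity modulus
  have hmod : ∀ x ∈ Ω₁ᶜ, ∀ ε : ℝ, 0 < ε → ∀ᶠ x' in 𝓝 x, ∀ n, ‖T n x' - T n x‖ ≤ ε := by
    intro x hx ε hε
    have hxK : x ∉ K₀ := fun h => hx (hK₀Ω₁ h)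
    set ε' : ℝ := ε / (B + 1) with hε'_def
    have hε' : 0 < ε' := div_pos hε (by linarith)
    have h1 : ∀ᶠ x' in 𝓝 x, ∀ y ∈ K₀, ‖Kk x' y - Kk x y‖ ≤ ε' := by
      apply hK₀c.eventually_forall_of_forall_eventually
      intro y hy
      have hxy : x ≠ y := fun h => hxK (h ▸ hy)
      have hb : ContinuousAt (fun z : EuclideanSpace ℝ (Fin d) × EuclideanSpace ℝ (Fin d) =>
          Kk x z.2) (x, y) := by
        have h : (0:ℝ) < ‖x - y‖ := by rwa [norm_pos_iff, sub_ne_zero]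
        simp only [hKk_def]
        have hc1 : ContinuousAt (fun z : EuclideanSpace ℝ (Fin d) × EuclideanSpace ℝ (Fin d) =>
            x - z.2) (x, y) := (continuous_const.sub continuous_snd).continuousAt
        exact ((hc1.norm.rpow_const (Or.inr hr0)).inv₀
          (Real.rpow_pos_of_pos h r).ne').smul hc1
      have hc1 : ContinuousAt (fun z : EuclideanSpace ℝ (Fin d) × EuclideanSpace ℝ (Fin d) =>
          ‖Kk z.1 z.2 - Kk x z.2‖) (x, y) := ((hKcont x y hxy).sub hb).norm
      have hc2 : Tendsto (fun z : EuclideanSpace ℝ (Fin d) × EuclideanSpace ℝ (Fin d) =>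
          ‖Kk z.1 z.2 - Kk x z.2‖) (𝓝 (x, y)) (𝓝 0) := by
        simpa using hc1.tendsto
      exact hc2.eventually (eventually_le_nhds hε')
    have h2 : ∀ᶠ x' in 𝓝 x, x' ∉ K₀ := hK₀cl.isOpen_compl.eventually_mem hxK
    filter_upwards [h1, h2] with x' h1' h2'
    intro n
    have hsub : T n x' - T n x = ∫ y, u n y • (Kk x' y - Kk x y) := by
      simp only [hT_def]
      rw [← integral_sub (hInt n x' h2') (hInt n x hxK)]
      congr 1
      funext y
      rw [smul_sub]
    rw [hsub]
    have hb : ∀ y, ‖u n y • (Kk x' y - Kk x y)‖ ≤ |u n y| * ε' := by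
      intro y
      rw [norm_smul, Real.norm_eq_abs]
      by_cases hy : u n y = 0
      · simp [hy]
      · exact mul_le_mul_of_nonneg_left
          (h1' y (hts n (subset_tsupport _ (Function.mem_support.mpr hy)))) (abs_nonneg _)
    calc ‖∫ y, u n y • (Kk x' y - Kk x y)‖ ≤ ∫ y, |u n y| * ε' :=
          norm_integral_le_of_norm_le ((hIntu n).mul_const _) (ae_of_all _ hb)
      _ = (∫ y, |u n y|) * ε' := integral_mul_const _ _
      _ ≤ B * ε' := mul_le_mul_of_nonneg_right (hL1 n) hε'.le
      _ ≤ (B + 1) * ε' := mul_le_mul_of_nonneg_right (by linarith) hε'.le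
      _ = ε := by
          rw [hε'_def, mul_comm, div_mul_cancel₀ _ (by linarith : B + 1 ≠ 0)]
  -- continuity of T n
  have hTcont : ∀ n, ContinuousOn (T n) K₀ᶜ := by
    intro n
    intro x hx
    apply ContinuousAt.continuousWithinAt
    obtain ⟨ρ', hρ', hball⟩ := Metric.isOpen_iff.mp hK₀cl.isOpen_compl x hx
    have hρ2 : (0:ℝ) < ρ' / 2 := by linarith
    simp only [hT_def]
    apply continuousAt_of_dominated (bound := fun y => |u n y| * (ρ' / 2) ^ (1 - r))
    · filter_upwards [Metric.ball_mem_nhds x hρ'] with x' hx'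
      exact (hInt n x' (hball hx')).aestronglyMeasurable
    · filter_upwards [Metric.ball_mem_nhds x hρ2] with x' hx'
      refine ae_of_all _ fun y => ?_
      rw [norm_smul, Real.norm_eq_abs]
      by_cases hy : u n y = 0
      · simp [hy]
      · have hyK : y ∈ K₀ := hts n (subset_tsupport _ (Function.mem_support.mpr hy))
        have hd1 : ρ' ≤ dist x y := by
          by_contra hcon
          push_neg at hcon
          exact hball (Metric.mem_ball.mpr (by rwa [dist_comm])) hyK
        have hx'x : dist x' x < ρ' / 2 := Metric.mem_ball.mp hx'
        have hd2 : ρ' / 2 ≤ ‖x' - y‖ := by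
          rw [← dist_eq_norm]
          have htri := dist_triangle x x' y
          rw [dist_comm x x'] at htri
          linarith
        have hxy' : x' ≠ y := by
          intro h
          rw [h, sub_self, norm_zero] at hd2
          linarith
        rw [hKnorm x' y hxy']
        exact mul_le_mul_of_nonneg_left
          (Real.rpow_le_rpow_of_nonpos hρ2 hd2 h1r) (abs_nonneg _)
    · exact (hIntu n).mul_const _
    · refine ae_of_all _ fun y => ?_
      by_cases hy : u n y = 0
      · simp only [hy, zero_smul]
        exact continuousAt_const
      · have hyK : y ∈ K₀ := hts n (subset_tsupport _ (Function.mem_support.mpr hy))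
        have hxy : x ≠ y := fun h => hx (h ▸ hyK)
        have hKy : ContinuousAt (fun x' => Kk x' y) x := by
          have h : (0:ℝ) < ‖x - y‖ := by rwa [norm_pos_iff, sub_ne_zero]
          simp only [hKk_def]
          have hc1 : ContinuousAt (fun x' : EuclideanSpace ℝ (Fin d) => x' - y) x :=
            (continuous_id.sub continuous_const).continuousAt
          exact ((hc1.norm.rpow_const (Or.inr hr0)).inv₀
            (Real.rpow_pos_of_pos h r).ne').smul hc1
        exact hKy.const_smul (u n y)
  have hsubc : Ω₁ᶜ ⊆ K₀ᶜ := Set.compl_subset_compl.mpr hK₀Ω₁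
  have hmeasF : ∀ n, AEStronglyMeasurable (fracGrad d s (u n)) (volume.restrict Ω₁ᶜ) := by
    intro n
    have h1 : ContinuousOn (fun x => (-(muS d s)) • T n x) (Ω₁ᶜ) :=
      (((hTcont n).mono hsubc).const_smul (-(muS d s)))
    exact (h1.aestronglyMeasurable hmeasΩ₁c).congr
      ((ae_restrict_iff' hmeasΩ₁c).mpr (ae_of_all _ fun x hx => (hrep n x hx).symm))
  -- dense sequence in Ω₁ᶜ
  haveI : Nonempty ↥(Ω₁ᶜ) := ⟨⟨z₀, hz₀⟩⟩
  obtain ⟨g, hg⟩ := TopologicalSpace.exists_dense_seq ↥(Ω₁ᶜ)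
  set xseq : ℕ → EuclideanSpace ℝ (Fin d) := fun i => (g i : EuclideanSpace ℝ (Fin d))
    with hxseq_def
  have hxmem : ∀ i, xseq i ∈ Ω₁ᶜ := fun i => (g i).2
  have hxdense : ∀ x ∈ Ω₁ᶜ, ∀ ρ : ℝ, 0 < ρ → ∃ i, dist x (xseq i) < ρ := by
    intro x hx ρ hρ
    obtain ⟨i, hi⟩ := Metric.denseRange_iff.mp hg ⟨x, hx⟩ ρ hρ
    exact ⟨i, by simpa [Subtype.dist_eq] using hi⟩
  -- extraction of subsequence
  have hseqmem : ∀ n, (fun i => T n (xseq i)) ∈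
      Set.pi Set.univ (fun i => Metric.closedBall (0 : EuclideanSpace ℝ (Fin d))
        (B * κ (xseq i))) := by
    intro n
    rw [Set.mem_univ_pi]
    intro i
    rw [Metric.mem_closedBall, dist_zero_right]
    exact hTle n _ (hxmem i)
  have hScompact : IsCompact (Set.pi Set.univ fun i =>
      Metric.closedBall (0 : EuclideanSpace ℝ (Fin d)) (B * κ (xseq i))) :=
    isCompact_univ_pi fun i => isCompact_closedBall _ _
  obtain ⟨L, -, σ, hσmono, hσtend⟩ := hScompact.isSeqCompact hseqmem
  have hconv : ∀ i, Tendsto (fun k => T (σ k) (xseq i)) atTop (𝓝 (L i)) :=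
    fun i => tendsto_pi_nhds.mp hσtend i
  -- Cauchy property at every point of Ω₁ᶜ
  have hCauchy : ∀ x ∈ Ω₁ᶜ, CauchySeq fun k => T (σ k) x := by
    intro x hx
    rw [Metric.cauchySeq_iff]
    intro ε hε
    obtain ⟨ρ, hρ, hρmod⟩ : ∃ ρ > 0, ∀ x', dist x' x < ρ → ∀ n, ‖T n x' - T n x‖ ≤ ε / 3 := by
      have h := hmod x hx (ε / 3) (by linarith)
      rw [Metric.eventually_nhds_iff] at h
      obtain ⟨ρ, hρ, h'⟩ := h
      exact ⟨ρ, hρ, fun x' hx' n => h' hx' n⟩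
    obtain ⟨i, hi⟩ := hxdense x hx ρ hρ
    have hC : CauchySeq fun k => T (σ k) (xseq i) := (hconv i).cauchySeq
    rw [Metric.cauchySeq_iff] at hC
    obtain ⟨N, hN⟩ := hC (ε / 3) (by linarith)
    refine ⟨N, fun m hm l hl => ?_⟩
    have hdi : dist (xseq i) x < ρ := by rwa [dist_comm]
    have h1 := hρmod (xseq i) hdi (σ m)
    have h2 := hρmod (xseq i) hdi (σ l)
    have h3 := hN m hm l hl
    have e1 : dist (T (σ m) x) (T (σ m) (xseq i)) ≤ ε / 3 := by
      rw [dist_eq_norm, ← norm_neg]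
      simpa using h1
    have e2 : dist (T (σ l) (xseq i)) (T (σ l) x) ≤ ε / 3 := by
      rw [dist_eq_norm]
      exact h2
    calc dist (T (σ m) x) (T (σ l) x)
        ≤ dist (T (σ m) x) (T (σ m) (xseq i)) + dist (T (σ m) (xseq i)) (T (σ l) (xseq i))
          + dist (T (σ l) (xseq i)) (T (σ l) x) := dist_triangle4 _ _ _ _
      _ < ε := by linarith
  have hexists : ∀ x ∈ Ω₁ᶜ, ∃ v, Tendsto (fun k => fracGrad d s (u (σ k)) x) atTop (𝓝 v) := by
    intro x hx
    obtain ⟨w, hw⟩ := cauchySeq_tendsto_of_complete (hCauchy x hx)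
    exact ⟨(-(muS d s)) • w, (hw.const_smul _).congr fun k => (hrep (σ k) x hx).symm⟩
  set V : EuclideanSpace ℝ (Fin d) → EuclideanSpace ℝ (Fin d) :=
    fun x => limUnder atTop fun k => fracGrad d s (u (σ k)) x with hV_def
  have hVx : ∀ x ∈ Ω₁ᶜ, Tendsto (fun k => fracGrad d s (u (σ k)) x) atTop (𝓝 (V x)) := by
    intro x hx
    obtain ⟨v, hv⟩ := hexists x hx
    have : V x = v := hv.limUnder_eq
    rwa [this]
  -- bounds on fracGrad and V
  set A : ℝ := |muS d s| * B with hA_def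
  have hnormF : ∀ n, ∀ x ∈ Ω₁ᶜ, ‖fracGrad d s (u n) x‖ ≤ A * κ x := by
    intro n x hx
    rw [hrep n x hx, norm_smul, Real.norm_eq_abs, abs_neg, hA_def, mul_assoc]
    exact mul_le_mul_of_nonneg_left (hTle n x hx) (abs_nonneg _)
  have hVle : ∀ x ∈ Ω₁ᶜ, ‖V x‖ ≤ A * κ x := fun x hx =>
    le_of_tendsto (hVx x hx).norm (Eventually.of_forall fun k => hnormF (σ k) x hx)
  -- MemLp of the dominating function
  have hκcont : Continuous κ := by
    rw [continuous_iff_continuousAt]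
    intro x
    have h1 : ContinuousAt (fun x : EuclideanSpace ℝ (Fin d) => c * (1 + ‖x‖)) x :=
      (continuous_const.mul (continuous_const.add continuous_norm)).continuousAt
    exact h1.rpow_const (Or.inl (by positivity))
  have hκsq : Integrable (fun x : EuclideanSpace ℝ (Fin d) => (A * κ x) ^ 2) := by
    have key : Integrable (fun x : EuclideanSpace ℝ (Fin d) =>
        (1 + ‖x‖) ^ (-(2 * (r - 1)))) volume := by
      apply integrable_one_add_norm
      rw [finrank_euclideanSpace_fin]
      exact hrd
    have heq : (fun x : EuclideanSpace ℝ (Fin d) => (A * κ x) ^ 2) =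
        fun x => (A ^ 2 * (c ^ (1 - r)) ^ 2) * (1 + ‖x‖) ^ (-(2 * (r - 1))) := by
      funext x
      have h1 : (0:ℝ) < 1 + ‖x‖ := by positivity
      have h2 : ((1 + ‖x‖) ^ (1 - r)) ^ (2:ℕ) = (1 + ‖x‖) ^ (-(2 * (r - 1))) := by
        rw [← Real.rpow_natCast ((1 + ‖x‖) ^ (1 - r)) 2, ← Real.rpow_mul h1.le]
        norm_num
        ring_nf
      calc (A * κ x) ^ 2 = (A * (c ^ (1 - r) * (1 + ‖x‖) ^ (1 - r))) ^ 2 := by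
            simp only [hκ_def]; rw [Real.mul_rpow hc.le h1.le]
        _ = (A ^ 2 * (c ^ (1 - r)) ^ 2) * ((1 + ‖x‖) ^ (1 - r)) ^ (2:ℕ) := by ring
        _ = (A ^ 2 * (c ^ (1 - r)) ^ 2) * (1 + ‖x‖) ^ (-(2 * (r - 1))) := by rw [h2]
    rw [heq]
    exact key.const_mul _
  have hκmem : MemLp (fun x => A * κ x) 2 (volume.restrict Ω₁ᶜ) := by
    refine ((memLp_two_iff_integrable_sq ?_).mpr hκsq).restrict _
    exact (continuous_const.mul hκcont).aestronglyMeasurable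
  have hmeasV : AEStronglyMeasurable V (volume.restrict Ω₁ᶜ) :=
    aestronglyMeasurable_of_tendsto_ae atTop (fun k => hmeasF (σ k))
      ((ae_restrict_iff' hmeasΩ₁c).mpr (ae_of_all _ hVx))
  have hmemV : MemLp V 2 (volume.restrict Ω₁ᶜ) := by
    refine hκmem.of_le hmeasV ?_
    refine (ae_restrict_iff' hmeasΩ₁c).mpr (ae_of_all _ fun x hx => ?_)
    exact (hVle x hx).trans (le_abs_self _)
  -- conclusion via dominated convergence
  refine ⟨σ, hσmono, V, hmemV, ?_⟩
  have h0 : Tendsto (fun k => ∫ x in Ω₁ᶜ, ‖fracGrad d s (u (σ k)) x - V x‖ ^ 2)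
      atTop (𝓝 (∫ _x in Ω₁ᶜ, (0:ℝ))) := by
    apply tendsto_integral_of_dominated_convergence (fun x => (2 * (A * κ x)) ^ 2)
    · intro k
      have hn := ((hmeasF (σ k)).sub hmeasV).norm
      exact (hn.mul hn).congr (ae_of_all _ fun x => (sq _).symm)
    · have heq : (fun x : EuclideanSpace ℝ (Fin d) => (2 * (A * κ x)) ^ 2) =
          fun x => 4 * (A * κ x) ^ 2 := by funext x; ring
      rw [heq]
      exact ((hκsq.const_mul 4).restrict)
    · intro k
      refine (ae_restrict_iff' hmeasΩ₁c).mpr (ae_of_all _ fun x hx => ?_)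
      have h1 : ‖fracGrad d s (u (σ k)) x - V x‖ ≤ 2 * (A * κ x) := by
        calc ‖fracGrad d s (u (σ k)) x - V x‖
            ≤ ‖fracGrad d s (u (σ k)) x‖ + ‖V x‖ := norm_sub_le _ _
          _ ≤ A * κ x + A * κ x := add_le_add (hnormF (σ k) x hx) (hVle x hx)
          _ = 2 * (A * κ x) := by ring
      rw [Real.norm_eq_abs, abs_of_nonneg (by positivity)]
      exact pow_le_pow_left₀ (norm_nonneg _) h1 2
    · refine (ae_restrict_iff' hmeasΩ₁c).mpr (ae_of_all _ fun x hx => ?_)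
      have h1 : Tendsto (fun k => fracGrad d s (u (σ k)) x - V x) atTop (𝓝 0) := by
        simpa using (hVx x hx).sub_const (V x)
      have h2 := h1.norm.pow 2
      rwa [norm_zero, zero_pow (by norm_num : (2:ℕ) ≠ 0)] at h2
  rwa [integral_zero] at h0


end
end

section
/- Let H and H₁ be Hilbert spaces and let i : H₁ → H be an injective continuous linear map. Let (v_n) be a bounded sequence in H₁ and v ∈ H such that i(v_n) converges weakly to v in H. Then there exists w ∈ H₁ with i(w) = v and such that v_n converges weakly to w in H₁. -/
open Filter Topology

/-!
The adjoint `i†` of an injective operator has dense range, and `⟪i† z, v_n⟫ = ⟪z, i v_n⟫`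
converges for every `z`. Since `(v_n)` is bounded, the functionals `⟪·, v_n⟫` are
equicontinuous, so convergence on the dense set `range i†` propagates to all of `H₁`.
By Banach–Steinhaus the pointwise limit is a continuous functional, hence `⟪·, w⟫` for some
`w ∈ H₁` by the Riesz representation theorem, and testing against `i† z` shows `i w = v`.
-/

theorem ContinuousLinearMap.denseRange_adjoint_of_injective
    {𝕜 E F : Type*} [RCLike 𝕜] [NormedAddCommGroup E] [InnerProductSpace 𝕜 E] [CompleteSpace E]
    [NormedAddCommGroup F] [InnerProductSpace 𝕜 F] [CompleteSpace F]
    {T : E →L[𝕜] F} (hT : Function.Injective T) :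
    DenseRange (ContinuousLinearMap.adjoint T) := by
  rw [DenseRange, ← ContinuousLinearMap.coe_coe, ← LinearMap.coe_range,
    Submodule.dense_iff_topologicalClosure_eq_top, ← T.orthogonal_ker,
    LinearMap.ker_eq_bot_of_injective hT, Submodule.bot_orthogonal_eq_top]

theorem ContinuousLinearMap.cauchySeq_apply_of_dense
    {𝕜 E F : Type*} [NontriviallyNormedField 𝕜] [SeminormedAddCommGroup E] [NormedSpace 𝕜 E]
    [SeminormedAddCommGroup F] [NormedSpace 𝕜 F]
    {f : ℕ → E →L[𝕜] F} {C : ℝ} (hC : ∀ n, ‖f n‖ ≤ C) {s : Set E} (hs : Dense s)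
    (hcauchy : ∀ y ∈ s, CauchySeq fun n ↦ f n y) (x : E) :
    CauchySeq fun n ↦ f n x := by
  have hC₀ : 0 ≤ C := (norm_nonneg _).trans (hC 0)
  rw [Metric.cauchySeq_iff]
  intro ε hε
  have hδ : 0 < ε / (3 * (C + 1)) := by positivity
  obtain ⟨y, hys, hxy⟩ := hs.exists_dist_lt x hδ
  have hclose : ∀ n, dist (f n x) (f n y) < ε / 3 := fun n ↦
    calc dist (f n x) (f n y) ≤ C * dist x y :=
          ((f n).dist_le_opNorm x y).trans (by gcongr; exact hC n)
      _ < (C + 1) * (ε / (3 * (C + 1))) := by nlinarith [dist_nonneg (x := x) (y := y)]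
      _ = ε / 3 := by field_simp
  obtain ⟨N, hN⟩ := Metric.cauchySeq_iff.1 (hcauchy y hys) (ε / 3) (by positivity)
  refine ⟨N, fun m hm n hn ↦ ?_⟩
  calc dist (f m x) (f n x) ≤ dist (f m x) (f m y) + dist (f m y) (f n y) + dist (f n y) (f n x) :=
        dist_triangle4 _ _ _ _
    _ < ε / 3 + ε / 3 + ε / 3 := by
        gcongr
        · exact hclose m
        · exact hN m hm n hn
        · rw [dist_comm]; exact hclose n
    _ = ε := by ring

theorem exists_tendsto_inner_of_forall_cauchySeq
    {E : Type*} [NormedAddCommGroup E] [InnerProductSpace ℝ E] [CompleteSpace E]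
    {v : ℕ → E} (hv : ∀ u, CauchySeq fun n ↦ (inner ℝ u (v n) : ℝ)) :
    ∃ w : E, ∀ u, Tendsto (fun n ↦ (inner ℝ u (v n) : ℝ)) atTop (𝓝 (inner ℝ u w)) := by
  choose g hg using fun u ↦ cauchySeq_tendsto_of_complete (hv u)
  have hlim : Tendsto (fun n u ↦ innerSL ℝ (v n) u) atTop (𝓝 g) :=
    tendsto_pi_nhds.2 fun u ↦ by simpa only [innerSL_apply_apply, real_inner_comm] using hg u
  refine ⟨(InnerProductSpace.toDual ℝ E).symm (continuousLinearMapOfTendsto _ hlim), fun u ↦ ?_⟩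
  rw [real_inner_comm, InnerProductSpace.toDual_symm_apply]
  exact hg u

/-- If `i : H₁ → H` is an injective continuous linear map between Hilbert spaces,
`(v_n)` is bounded in `H₁` and `i(v_n) ⇀ v` in `H`, then `v = i(w)` for some `w ∈ H₁`
and `v_n ⇀ w` in `H₁`. -/
theorem stmt12 {H H₁ : Type*}
    [NormedAddCommGroup H] [InnerProductSpace ℝ H] [CompleteSpace H]
    [NormedAddCommGroup H₁] [InnerProductSpace ℝ H₁] [CompleteSpace H₁]
    (i : H₁ →L[ℝ] H) (hi : Function.Injective i)
    (v : H) (vn : ℕ → H₁)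
    (hbdd : ∃ M : ℝ, ∀ n, ‖vn n‖ ≤ M)
    (hconv : ∀ u : H, Tendsto (fun n => (inner ℝ u (i (vn n)) : ℝ)) atTop
      (𝓝 (inner ℝ u v : ℝ))) :
    ∃ w : H₁, i w = v ∧
      ∀ u : H₁, Tendsto (fun n => (inner ℝ u (vn n) : ℝ)) atTop (𝓝 (inner ℝ u w : ℝ)) := by
  obtain ⟨M, hM⟩ := hbdd
  have hadj : ∀ z, Tendsto (fun n ↦ (inner ℝ (i.adjoint z) (vn n) : ℝ)) atTop (𝓝 (inner ℝ z v)) :=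
    fun z ↦ by simpa only [ContinuousLinearMap.adjoint_inner_left] using hconv z
  have hcauchy : ∀ u, CauchySeq fun n ↦ (inner ℝ u (vn n) : ℝ) := by
    intro u
    simpa only [innerSL_apply_apply, real_inner_comm u] using
      ContinuousLinearMap.cauchySeq_apply_of_dense (f := fun n ↦ innerSL ℝ (vn n))
        (fun n ↦ (innerSL_apply_norm ℝ (vn n)).trans_le (hM n))
        (ContinuousLinearMap.denseRange_adjoint_of_injective hi)
        (by rintro _ ⟨z, rfl⟩; simpa only [innerSL_apply_apply, real_inner_comm] using
          (hadj z).cauchySeq) u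
  obtain ⟨w, hw⟩ := exists_tendsto_inner_of_forall_cauchySeq hcauchy
  refine ⟨w, ext_inner_left ℝ fun z ↦ ?_, hw⟩
  rw [← ContinuousLinearMap.adjoint_inner_left]
  exact tendsto_nhds_unique (hw _) (hadj z)
end
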